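/- Let $p : \{-1,1\}^n \to \mathbb{R}$ be a multilinear polynomial of degree at most $d$ with $\|p\|_2 = 1$ (where $\|p\|_2^2 = \mathbb{E}_x[p(x)^2]$ under the uniform distribution). Let $f(x) = \mathrm{sign}(p(x))$ and let $g : \{-1,1\}^n \to \{-1,1\}$ be any Boolean function with $\mathrm{Chow}_d(f,g) \le \delta$. Then for any $\eta > 0$, the set $D' = \{x : f(x) \ne g(x) \text{ and } |p(x)| > \delta/\eta\}$ has probability at most $\eta/2$ under the uniform distribution. -/

import Mathlib

open Finset

def pm {n : ℕ} (x : Fin n → Bool) (i : Fin n) : ℝ := if x i then 1 else -1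

noncomputable def expect (n : ℕ) (F : (Fin n → Bool) → ℝ) : ℝ :=
  (∑ x : Fin n → Bool, F x) / 2 ^ n

noncomputable def chi {n : ℕ} (S : Finset (Fin n)) (x : Fin n → Bool) : ℝ :=
  ∏ i ∈ S, pm x i

noncomputable def fCoeffD {n : ℕ} (f : (Fin n → Bool) → ℝ) (S : Finset (Fin n)) : ℝ :=
  expect n (fun x => f x * chi S x)

noncomputable def chowDist (n d : ℕ) (f g : (Fin n → Bool) → ℝ) : ℝ :=
  Real.sqrt (∑ S ∈ Finset.univ.filter (fun S : Finset (Fin n) => S.card ≤ d),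
    (fCoeffD f S - fCoeffD g S) ^ 2)

noncomputable def probOf (n : ℕ) (P : (Fin n → Bool) → Prop) : ℝ :=
  ((@Finset.filter _ P (Classical.decPred P) Finset.univ).card : ℝ) / 2 ^ n

noncomputable def sgn (z : ℝ) : ℝ := if 0 ≤ z then 1 else -1

lemma sum_chi_mul_chi {n : ℕ} (S T : Finset (Fin n)) :
    ∑ x : Fin n → Bool, chi S x * chi T x = if S = T then (2:ℝ)^n else 0 := by
  set G : Fin n → Bool → ℝ := fun i b =>
    (if i ∈ S then (if b then (1:ℝ) else -1) else 1) *
    (if i ∈ T then (if b then (1:ℝ) else -1) else 1) with hG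
  have key : ∀ x : Fin n → Bool, chi S x * chi T x = ∏ i : Fin n, G i (x i) := by
    intro x
    have : ∀ i : Fin n, G i (x i) =
        (if i ∈ S then pm x i else 1) * (if i ∈ T then pm x i else 1) := by
      intro i; rfl
    simp_rw [this]
    rw [Finset.prod_mul_distrib, Finset.prod_ite_mem, Finset.prod_ite_mem,
      Finset.univ_inter, Finset.univ_inter]
    rfl
  simp_rw [key]
  rw [← Fintype.piFinset_univ, ← Finset.prod_univ_sum]
  have e2 : ∀ i : Fin n, (∑ b : Bool, G i b) = if ((i ∈ S) ↔ (i ∈ T)) then 2 else 0 := by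
    intro i
    rw [Fintype.sum_bool, hG]
    by_cases hS : i ∈ S <;> by_cases hT : i ∈ T <;> simp [hS, hT] <;> norm_num
  simp_rw [e2]
  by_cases hST : S = T
  · subst hST
    simp [Finset.prod_const]
  · rw [if_neg hST]
    have : ∃ i, ¬((i ∈ S) ↔ (i ∈ T)) := by
      by_contra h
      push_neg at h
      exact hST (Finset.ext fun i => by have := h i; tauto)
    obtain ⟨i, hi⟩ := this
    exact Finset.prod_eq_zero (Finset.mem_univ i) (by rw [if_neg hi])

/-- If `f = sign(p)` for a degree-`d` multilinear `p` with `‖p‖₂ = 1`, `g` is Boolean-valued,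
and `Chow_d(f,g) ≤ δ`, then `Pr[f ≠ g and |p| > δ/η] ≤ η/2`. -/
theorem stmt2 (n d : ℕ) (c : Finset (Fin n) → ℝ)
    (hdeg : ∀ S : Finset (Fin n), d < S.card → c S = 0)
    (p : (Fin n → Bool) → ℝ)
    (hp : ∀ x, p x = ∑ S : Finset (Fin n), c S * chi S x)
    (hnorm : expect n (fun x => p x ^ 2) = 1)
    (f g : (Fin n → Bool) → ℝ)
    (hf : ∀ x, f x = sgn (p x))
    (hg : ∀ x, g x = 1 ∨ g x = -1)
    (δ η : ℝ) (hδ : 0 ≤ δ) (hη : 0 < η)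
    (hchow : chowDist n d f g ≤ δ) :
    probOf n (fun x => f x ≠ g x ∧ δ / η < |p x|) ≤ η / 2 := by
  have h2n : (0:ℝ) < 2 ^ n := by positivity
  -- Parseval: ∑ c S ^ 2 = 1
  have hA : ∑ S : Finset (Fin n), (c S) ^ 2 = 1 := by
    have hx : (∑ x : Fin n → Bool, p x ^ 2) = (∑ S : Finset (Fin n), (c S)^2) * 2 ^ n := by
      calc (∑ x : Fin n → Bool, p x ^ 2)
          = ∑ x : Fin n → Bool, ∑ S : Finset (Fin n), ∑ T : Finset (Fin n),
              (c S * c T) * (chi S x * chi T x) := by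
            apply Finset.sum_congr rfl; intro x _
            rw [hp, sq, Finset.sum_mul_sum]
            apply Finset.sum_congr rfl; intro S _
            apply Finset.sum_congr rfl; intro T _
            ring
        _ = ∑ S : Finset (Fin n), ∑ T : Finset (Fin n),
              (c S * c T) * (∑ x : Fin n → Bool, chi S x * chi T x) := by
            rw [Finset.sum_comm]
            apply Finset.sum_congr rfl; intro S _
            rw [Finset.sum_comm]
            apply Finset.sum_congr rfl; intro T _
            rw [Finset.mul_sum]
        _ = ∑ S : Finset (Fin n), (c S)^2 * 2^n := by
            apply Finset.sum_congr rfl; intro S _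
            simp_rw [sum_chi_mul_chi, mul_ite, mul_zero]
            rw [Finset.sum_ite_eq]
            simp [sq]
        _ = (∑ S : Finset (Fin n), (c S)^2) * 2 ^ n := by rw [Finset.sum_mul]
    have h := hnorm
    unfold _root_.expect at h
    rw [hx] at h
    field_simp at h
    linarith
  -- the key quantity
  set K := Finset.univ.filter (fun S : Finset (Fin n) => S.card ≤ d) with hK
  set Δ : Finset (Fin n) → ℝ := fun S => fCoeffD f S - fCoeffD g S with hΔ
  -- expectation of (f-g)p
  have hB : (∑ x : Fin n → Bool, (f x - g x) * p x) = (∑ S ∈ K, c S * Δ S) * 2 ^ n := by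
    calc (∑ x : Fin n → Bool, (f x - g x) * p x)
        = ∑ x : Fin n → Bool, ∑ S : Finset (Fin n), c S * ((f x - g x) * chi S x) := by
          apply Finset.sum_congr rfl; intro x _
          rw [hp, Finset.mul_sum]
          apply Finset.sum_congr rfl; intro S _; ring
      _ = ∑ S : Finset (Fin n), c S * (∑ x : Fin n → Bool, (f x - g x) * chi S x) := by
          rw [Finset.sum_comm]
          apply Finset.sum_congr rfl; intro S _
          rw [Finset.mul_sum]
      _ = ∑ S : Finset (Fin n), c S * (Δ S * 2 ^ n) := by
          apply Finset.sum_congr rfl; intro S _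
          congr 1
          have hΔS : Δ S = ((∑ x : Fin n → Bool, f x * chi S x)
              - (∑ x : Fin n → Bool, g x * chi S x)) / 2 ^ n := by
            simp only [hΔ]
            unfold fCoeffD _root_.expect
            ring
          rw [hΔS, div_mul_cancel₀ _ (ne_of_gt h2n), ← Finset.sum_sub_distrib]
          apply Finset.sum_congr rfl; intro x _; ring
      _ = ∑ S ∈ K, c S * (Δ S * 2 ^ n) := by
          rw [Finset.sum_filter]
          apply Finset.sum_congr rfl; intro S _
          by_cases hs : S.card ≤ d
          · rw [if_pos hs]
          · rw [if_neg hs, hdeg S (lt_of_not_ge hs), zero_mul]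
      _ = (∑ S ∈ K, c S * Δ S) * 2 ^ n := by
          rw [Finset.sum_mul]
          apply Finset.sum_congr rfl; intro S _; ring
  -- Cauchy-Schwarz
  have hCS : (∑ S ∈ K, c S * Δ S) ≤ δ := by
    have h1 : (∑ S ∈ K, c S * Δ S) ^ 2 ≤ (∑ S ∈ K, (c S)^2) * (∑ S ∈ K, (Δ S)^2) :=
      Finset.sum_mul_sq_le_sq_mul_sq K _ _
    have h2 : (∑ S ∈ K, (c S)^2) ≤ 1 := by
      rw [← hA]
      exact Finset.sum_le_sum_of_subset_of_nonneg (Finset.filter_subset _ _)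
        (fun S _ _ => sq_nonneg _)
    have hnn : 0 ≤ ∑ S ∈ K, (Δ S)^2 := Finset.sum_nonneg fun S _ => sq_nonneg _
    have h3 : (∑ S ∈ K, (Δ S)^2) ≤ δ ^ 2 := by
      have hch : Real.sqrt (∑ S ∈ K, (Δ S)^2) ≤ δ := hchow
      nlinarith [Real.sq_sqrt hnn, Real.sqrt_nonneg (∑ S ∈ K, (Δ S)^2)]
    nlinarith
  have hsum : (∑ x : Fin n → Bool, (f x - g x) * p x) ≤ δ * 2 ^ n := by
    rw [hB]
    have := mul_le_mul_of_nonneg_right hCS (le_of_lt h2n)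
    linarith
  -- pointwise facts
  have hfp : ∀ x, f x * p x = |p x| := by
    intro x
    rw [hf]
    unfold sgn
    split
    · rw [one_mul, abs_of_nonneg]; assumption
    · rw [abs_of_neg (lt_of_not_ge (by assumption))]; ring
  have hpos : ∀ x, 0 ≤ (f x - g x) * p x := by
    intro x
    have := hfp x
    rcases hg x with h | h <;>
      rw [sub_mul, this, h] <;>
      [linarith [le_abs_self (p x)]; linarith [neg_abs_le (p x)]]
  have hbig : ∀ x, f x ≠ g x → (f x - g x) * p x = 2 * |p x| := by
    intro x hne
    have hfx : f x = 1 ∨ f x = -1 := by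
      rw [hf]; unfold sgn; split
      · exact Or.inl rfl
      · exact Or.inr rfl
    have hfpx := hfp x
    rcases hfx with h1 | h1 <;> rcases hg x with h2 | h2
    · exact absurd (h1.trans h2.symm) hne
    · rw [h1, one_mul] at hfpx
      rw [h1, h2]; linarith
    · rw [h1] at hfpx
      rw [h1, h2]; nlinarith
    · exact absurd (h1.trans h2.symm) hne
  -- counting
  have main : ∀ (inst : DecidablePred (fun x => f x ≠ g x ∧ δ / η < |p x|)),
      ((@Finset.filter _ (fun x => f x ≠ g x ∧ δ / η < |p x|) inst Finset.univ).card : ℝ)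
        / 2 ^ n ≤ η / 2 := by
    intro inst
    set A := @Finset.filter _ (fun x => f x ≠ g x ∧ δ / η < |p x|) inst Finset.univ with hAdef
    have hmem : ∀ x ∈ A, f x ≠ g x ∧ δ / η < |p x| := by
      intro x hx
      exact (Finset.mem_filter.mp hx).2
    have hAsum : ∀ x ∈ A, 2 * (δ / η) ≤ (f x - g x) * p x := by
      intro x hx
      obtain ⟨hne, hlt⟩ := hmem x hx
      rw [hbig x hne]
      nlinarith
    have hsub : (∑ x ∈ A, (f x - g x) * p x) ≤ ∑ x : Fin n → Bool, (f x - g x) * p x :=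
      Finset.sum_le_sum_of_subset_of_nonneg (Finset.subset_univ A) (fun x _ _ => hpos x)
    have hAle : (A.card : ℝ) * (2 * (δ / η)) ≤ δ * 2 ^ n := by
      have h1 := Finset.card_nsmul_le_sum A (fun x => (f x - g x) * p x) (2 * (δ / η)) hAsum
      rw [nsmul_eq_mul] at h1
      linarith
    rcases eq_or_lt_of_le hδ with hδ0 | hδ0
    · -- δ = 0 : A is empty
      have hAempty : A = ∅ := by
        by_contra hne
        have hne' : A.Nonempty := Finset.nonempty_iff_ne_empty.mpr hne
        have hposA : 0 < ∑ x ∈ A, (f x - g x) * p x := by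
          apply Finset.sum_pos _ hne'
          intro x hx
          obtain ⟨hfg, hlt⟩ := hmem x hx
          rw [hbig x hfg]
          have h0 : 0 ≤ δ / η := div_nonneg hδ hη.le
          nlinarith
        rw [← hδ0] at hsum
        linarith
      rw [hAempty]
      simp
      positivity
    · -- δ > 0
      rw [div_le_div_iff₀ h2n (by norm_num : (0:ℝ) < 2)]
      have h1 : (A.card:ℝ) * 2 * δ ≤ η * 2^n * δ := by
        have h2 := mul_le_mul_of_nonneg_right hAle hη.le
        have he : (A.card:ℝ) * (2 * (δ / η)) * η = (A.card:ℝ) * 2 * δ := by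
          field_simp
        have he2 : δ * 2^n * η = η * 2^n * δ := by ring
        rw [he, he2] at h2
        exact h2
      exact le_of_mul_le_mul_right h1 hδ0
  exact main _
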